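/- Let n > 2k with k ≥ 2. Set μ = (k, k−1, 1^{n−2k}) and ν = (k, k, 1^{n−2k−1}), partitions of n−1, and regard the Young subgroups S_{μ'} and S_ν of S_{n−1} as subgroups of S_n via the standard embedding fixing n. Then in the skein module V(n,k,0): the group algebra element [S_{μ'}]_− does not annihilate π₁ (indeed [S_{μ'}]_− · π₁ = 2^{k−2}(n−2k+2)! · π₁ ≠ 0) and the group algebra element [S_ν]_+ does not annihilate π₀. -/

import Mathlib

namespace SkeinNC

/-- A set partition of `Fin n` (as an equivalence relation / setoid) is *noncrossing*
if whenever `a < b < c < d` with `a ~ c` and `b ~ d`, all four lie in one block. -/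
def IsNC {n : ℕ} (π : Setoid (Fin n)) : Prop :=
  ∀ a b c d : Fin n, a < b → b < c → c < d → π.r a c → π.r b d → π.r a b

/-- The set partition `w(π)`: `w i` and `w j` are blockmates in `w(π)` iff
`i` and `j` are blockmates in `π`. -/
def permSP {n : ℕ} (w : Equiv.Perm (Fin n)) (π : Setoid (Fin n)) : Setoid (Fin n) :=
  Setoid.comap w.symm π

/-- The block of `π` containing `i`. -/
def block {n : ℕ} (π : Setoid (Fin n)) (i : Fin n) : Set (Fin n) := {j | π.r i j}

/-- The number of blocks of a set partition. -/
noncomputable def numBlocks {n : ℕ} (π : Setoid (Fin n)) : ℕ := Nat.card (Quotient π)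

/-- The number of singleton blocks of a set partition. -/
noncomputable def numSingletons {n : ℕ} (π : Setoid (Fin n)) : ℕ :=
  Nat.card {i : Fin n // block π i = {i}}

/-- Replace the union `S` (a union of blocks of `π`) by the two blocks `S ∩ C` and `S \ C`,
keeping all blocks outside `S` unchanged. -/
def replaceTwo {n : ℕ} (π : Setoid (Fin n)) (S C : Set (Fin n)) : Setoid (Fin n) where
  r x y := (x ∉ S ∧ y ∉ S ∧ π.r x y) ∨ (x ∈ S ∧ y ∈ S ∧ (x ∈ C ↔ y ∈ C))
  iseqv := by
    constructor
    · intro x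
      by_cases hx : x ∈ S
      · exact Or.inr ⟨hx, hx, Iff.rfl⟩
      · exact Or.inl ⟨hx, hx, π.refl x⟩
    · rintro x y (⟨hx, hy, h⟩ | ⟨hx, hy, h⟩)
      · exact Or.inl ⟨hy, hx, π.symm h⟩
      · exact Or.inr ⟨hy, hx, h.symm⟩
    · rintro x y z (⟨hx, hy, h⟩ | ⟨hx, hy, h⟩) (⟨hy', hz, h'⟩ | ⟨hy', hz, h'⟩)
      · exact Or.inl ⟨hx, hz, π.trans h h'⟩
      · exact absurd hy' hy
      · exact absurd hy hy'
      · exact Or.inr ⟨hx, hz, h.trans h'⟩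

/-- The free `ℚ`-vector space on the set of all set partitions of `Fin n`. -/
abbrev PMod (n : ℕ) : Type := Setoid (Fin n) →₀ ℚ

/-- The basis vector of `PMod n` corresponding to a set partition. -/
noncomputable def bp {n : ℕ} (π : Setoid (Fin n)) : PMod n := Finsupp.single π 1

/-- `V(n)`: the span of the noncrossing set partitions inside `PMod n`. -/
noncomputable def Vsub (n : ℕ) : Submodule ℚ (PMod n) :=
  Submodule.span ℚ (bp '' {π : Setoid (Fin n) | IsNC π})

/-- `V(n,k)`: the span of noncrossing set partitions with exactly `k` blocks. -/
noncomputable def VsubK (n k : ℕ) : Submodule ℚ (PMod n) :=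
  Submodule.span ℚ (bp '' {π : Setoid (Fin n) | IsNC π ∧ numBlocks π = k})

/-- `V(n,k,s)`: the span of noncrossing set partitions with exactly `k` blocks
and exactly `s` singleton blocks. -/
noncomputable def VsubKS (n k s : ℕ) : Submodule ℚ (PMod n) :=
  Submodule.span ℚ
    (bp '' {π : Setoid (Fin n) | IsNC π ∧ numBlocks π = k ∧ numSingletons π = s})

/-- The skein resolution of an (almost noncrossing) set partition `π` computed at the
crossing given by the adjacent pair `i`, `i'` (where `i'` is the successor of `i`):
`σ(π) = π₁ + π₂ - π₃ - π₄`, where `π₁ = s_i(π)`; `π₂` replaces the blocks of `i` and `i'`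
by `{i,i'}` and the union of the remainders; `π₃` keeps `B_{i'}(π) ∖ {i'}` as a block and
adjoins `i'` to the block of `i` (included only when `|B_{i'}(π)| ≥ 3`, i.e. `ℓ ≥ 2`);
`π₄` keeps `B_i(π) ∖ {i}` as a block and adjoins `i` to the block of `i'` (included only
when `|B_i(π)| ≥ 3`, i.e. `k ≥ 2`). -/
noncomputable def skeinAt {n : ℕ} (π : Setoid (Fin n)) (i i' : Fin n) : PMod n :=
  bp (permSP (Equiv.swap i i') π)
  + bp (replaceTwo π (block π i ∪ block π i') {i, i'})
  - (if 3 ≤ Nat.card (block π i') then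
      bp (replaceTwo π (block π i ∪ block π i') (block π i' \ {i'})) else 0)
  - (if 3 ≤ Nat.card (block π i) then
      bp (replaceTwo π (block π i ∪ block π i') (block π i \ {i})) else 0)

open Classical in
/-- The value of the skein operator `τ_i` on a (noncrossing) basis element. -/
noncomputable def tauFun {n : ℕ} (i i' : Fin n) (π : Setoid (Fin n)) : PMod n :=
  if block π i = block π i' then - bp π
  else if IsNC (permSP (Equiv.swap i i') π) then bp (permSP (Equiv.swap i i') π)
  else skeinAt (permSP (Equiv.swap i i') π) i i'

/-- The skein operator `τ_i` (for the adjacent pair `i`, `i'`), extended linearly. -/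
noncomputable def tau {n : ℕ} (i i' : Fin n) : PMod n →ₗ[ℚ] PMod n :=
  Finsupp.lift (PMod n) ℚ (Setoid (Fin n)) (tauFun i i')

open Classical in
/-- The value of the sign-twisted operator `ρ_i` on a basis element of `P(n)`:
`ρ_i(π) = s_i(π)` if `{i}` or `{i+1}` is a singleton block of `π`, and `-s_i(π)` otherwise. -/
noncomputable def rhoFun {n : ℕ} (i i' : Fin n) (π : Setoid (Fin n)) : PMod n :=
  if block π i = {i} ∨ block π i' = {i'} then bp (permSP (Equiv.swap i i') π)
  else - bp (permSP (Equiv.swap i i') π)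

/-- The operator `ρ_i` (for the adjacent pair `i`, `i'`), extended linearly to `P(n)`. -/
noncomputable def rho {n : ℕ} (i i' : Fin n) : PMod n →ₗ[ℚ] PMod n :=
  Finsupp.lift (PMod n) ℚ (Setoid (Fin n)) (rhoFun i i')

/-- Rotation of set partitions: `r(π) = c(π)` where `c = (1,2,…,n)` is the long cycle. -/
def rotate (n : ℕ) : Setoid (Fin n) → Setoid (Fin n) := fun π => permSP (finRotate n) π

/-- `[r]_q = 1 + q + ⋯ + q^{r-1}` as a polynomial with rational coefficients. -/
noncomputable def qnat (m : ℕ) : Polynomial ℚ := ∑ j ∈ Finset.range m, Polynomial.X ^ j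

/-- The `q`-factorial `[m]!_q`. -/
noncomputable def qfact : ℕ → Polynomial ℚ
  | 0 => 1
  | m + 1 => qnat (m + 1) * qfact m

end SkeinNC

namespace SkeinNC

/-- The noncrossing partition `π₀ ∈ NC(n,k,0)` with blocks (0-indexed)
`{0, 2k-1, 2k, …, n-1}, {1, 2k-2}, {2, 2k-3}, …, {k-1, k}`. -/
def pi0 (n k : ℕ) : Setoid (Fin n) :=
  Setoid.ker (fun x : Fin n =>
    if x.val = 0 ∨ 2 * k - 1 ≤ x.val then 0 else min x.val (2 * k - 1 - x.val))

/-- The noncrossing partition `π₁ ∈ NC(n,k,0)` with blocks (0-indexed)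
`{0, 1, …, n-2k+1}, {n-2k+2, n-2k+3}, …, {n-2, n-1}`. -/
def pi1 (n k : ℕ) : Setoid (Fin n) :=
  Setoid.ker (fun x : Fin n =>
    if x.val + 2 * k ≤ n + 1 then 0 else (x.val - (n - 2 * k)) / 2)

/-- The Young subgroup (as a finite set of permutations) attached to a labeling
`c : Fin n → ℕ`: all permutations preserving each fiber of `c`. -/
def youngFinset (n : ℕ) (c : Fin n → ℕ) : Finset (Equiv.Perm (Fin n)) :=
  Finset.univ.filter (fun w => ∀ x, c (w x) = c x)

/-- Labeling of `Fin n` whose fibers are the blocks (0-indexed consecutive intervals)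
of the Young subgroup `S_{μ'} ⊆ S_{n-1} ⊆ S_n`, where `μ' = (n-2k+2, 2^{k-2}, 1)` is the
conjugate of `μ = (k, k-1, 1^{n-2k})`: the interval `{0,…,n-2k+1}`, then the pairs
`{n-2k+2, n-2k+3}, …, {n-4, n-3}`, then the singletons `{n-2}` and `{n-1}`. -/
def muConjLabel (n k : ℕ) : Fin n → ℕ := fun x =>
  if x.val + 2 * k ≤ n + 1 then 0
  else if n - 2 ≤ x.val then x.val
  else 1 + (x.val - (n - 2 * k + 2)) / 2

/-- Labeling of `Fin n` whose fibers are the blocks of the Young subgroup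
`S_ν ⊆ S_{n-1} ⊆ S_n`, where `ν = (k, k, 1^{n-2k-1})`: the intervals `{0,…,k-1}` and
`{k,…,2k-1}`, and singletons elsewhere. -/
def nuLabel (n k : ℕ) : Fin n → ℕ := fun x =>
  if x.val < k then 0 else if x.val < 2 * k then 1 else x.val

end SkeinNC

/-!
A Young subgroup `S_λ ⊆ S_n` whose blocks are consecutive intervals is generated by the
adjacent transpositions `s_i` lying inside its blocks, so both claims reduce to the action of
such `s_i`.

Every block of `S_{μ'}` lies inside a block of `π₁`, so `τ_i π₁ = -π₁ = sign(s_i) π₁` for these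
generators; hence `w · π₁ = sign(w) π₁` on `S_{μ'}` and `[S_{μ'}]₋ · π₁ = |S_{μ'}| π₁`.

For a generator `s_i` of `S_ν`, the points `i, i + 1` lie in different blocks of `π₀` and
`s_i(π₀)` is crossing. Then for every noncrossing `π` the `π₀`-coordinate of `τ_i(π)` equals that
of `π`: the only term of the skein relation that can equal `π₀` is `s_i(s_i(π)) = π`. So every
`w ∈ S_ν` preserves the `π₀`-coordinate, and that of `[S_ν]₊ · π₀` is `|S_ν| ≠ 0`.
-/

open Equiv Finset

namespace Equiv.Perm

section AdjacentSwaps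

variable {n : ℕ} {α : Type*} [PartialOrder α] {c : Fin n → α}

def adjSwapsWithinFibers (c : Fin n → α) : Set (Perm (Fin n)) :=
  {w | ∃ (i : Fin n) (hi : (i : ℕ) + 1 < n), c i = c ⟨i + 1, hi⟩ ∧ swap i ⟨i + 1, hi⟩ = w}

theorem swap_mem_closure_adjSwapsWithinFibers (hc : Monotone c) {x y : Fin n} (hxy : x ≤ y)
    (hcxy : c x = c y) : swap x y ∈ Submonoid.closure (adjSwapsWithinFibers c) := by
  obtain rfl | hlt := hxy.eq_or_lt
  · rw [swap_self]; exact Submonoid.one_mem _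
  obtain ⟨y, hy⟩ := y
  induction y generalizing x with
  | zero => exact absurd hlt (Nat.not_lt_zero _)
  | succ y ih =>
    obtain ⟨z, rfl⟩ : ∃ z : Fin n, (z : ℕ) = y := ⟨⟨y, by omega⟩, rfl⟩
    have hxz : x ≤ z := Fin.le_def.2 (Nat.le_of_lt_succ hlt)
    have hcz : c x = c z := le_antisymm (hc hxz) (hcxy ▸ hc (Nat.le_succ z : (z : ℕ) ≤ z + 1))
    have hgen : swap z ⟨z + 1, hy⟩ ∈ Submonoid.closure (adjSwapsWithinFibers c) :=
      Submonoid.subset_closure ⟨z, hy, hcz.symm.trans hcxy, rfl⟩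
    obtain rfl | hxz := hxz.eq_or_lt
    · exact hgen
    rw [swap_comm, ← swap_mul_swap_mul_swap hxz.ne hlt.ne]
    exact mul_mem (mul_mem hgen (ih _ hxz.le hcz hxz)) hgen

theorem mem_closure_adjSwapsWithinFibers (hc : Monotone c) {w : Perm (Fin n)}
    (hw : ∀ x, c (w x) = c x) : w ∈ Submonoid.closure (adjSwapsWithinFibers c) := by
  induction hs : #w.support using Nat.strong_induction_on generalizing w with
  | _ m ih =>
  by_cases hw1 : w = 1
  · exact hw1 ▸ Submonoid.one_mem _
  obtain ⟨x, hx⟩ : ∃ x, w x ≠ x := not_forall.1 fun h => hw1 (ext h)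
  have hswap : swap x (w x) ∈ Submonoid.closure (adjSwapsWithinFibers c) := by
    rcases le_total x (w x) with h | h
    · exact swap_mem_closure_adjSwapsWithinFibers hc h (hw x).symm
    · rw [swap_comm]; exact swap_mem_closure_adjSwapsWithinFibers hc h (hw x)
  have hrest : swap x (w x) * w ∈ Submonoid.closure (adjSwapsWithinFibers c) :=
    ih _ (hs ▸ card_support_swap_mul hx)
      (fun y => by rw [mul_apply, apply_swap_eq_self (hw x).symm, hw]) rfl
  simpa only [swap_mul_self_mul] using mul_mem hswap hrest

end AdjacentSwaps

section Representation

variable {α R M : Type*} [DecidableEq α] [Fintype α] [Ring R] [AddCommGroup M] [Module R M]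
  (φ : Perm α →* Module.End R M) {S : Set (Perm α)}

theorem apply_eq_sign_smul_of_mem_closure {v : M} (hS : ∀ s ∈ S, φ s v = ((sign s : ℤ) : R) • v)
    {w : Perm α} (hw : w ∈ Submonoid.closure S) : φ w v = ((sign w : ℤ) : R) • v := by
  induction hw using Submonoid.closure_induction with
  | mem s hs => exact hS s hs
  | one => simp
  | mul x y _ _ hx hy =>
    rw [map_mul, Module.End.mul_apply, hy, map_smul, hx, smul_smul, sign_mul, Units.val_mul,
      Int.cast_mul, Int.cast_comm]

end Representation

end Equiv.Perm

theorem Module.End.apply_invariant_of_mem_closure {G R M N : Type*} [Monoid G] [Semiring R]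
    [AddCommMonoid M] [Module R M] (φ : G →* Module.End R M) {S : Set G} (f : M → N)
    (hS : ∀ s ∈ S, ∀ v, f (φ s v) = f v) {w : G} (hw : w ∈ Submonoid.closure S) (v : M) :
    f (φ w v) = f v := by
  induction hw using Submonoid.closure_induction generalizing v with
  | mem s hs => exact hS s hs v
  | one => simp
  | mul x y _ _ hx hy => rw [map_mul, Module.End.mul_apply, hx, hy]

namespace SkeinNC

variable {n k : ℕ}

section SkeinOperator

variable {i i' : Fin n} {π ρ : Setoid (Fin n)}

lemma permSP_swap_rel {x y : Fin n} :
    (permSP (swap i i') π).r x y ↔ π.r (swap i i' x) (swap i i' y) := by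
  rw [permSP, symm_swap]; rfl

lemma permSP_swap_permSP_swap : permSP (swap i i') (permSP (swap i i') π) = π :=
  Setoid.ext fun _ _ => by simp only [permSP_swap_rel, swap_apply_self]

lemma block_eq_block_iff {x y : Fin n} : block π x = block π y ↔ π.r x y :=
  ⟨fun h => (h ▸ π.refl y : y ∈ block π x),
    fun h => Set.ext fun _ => ⟨π.trans (π.symm h), π.trans h⟩⟩

lemma tau_bp : tau i i' (bp π) = tauFun i i' π := by
  simp [tau, bp]

lemma tauFun_of_rel (h : π.r i i') : tauFun i i' π = -bp π :=
  if_pos (block_eq_block_iff.2 h)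

/-- Apart from `s_i(π)`, every term of the skein resolution joins `i` and `i'`. -/
lemma skeinAt_apply_of_not_rel (hρ : ¬ ρ.r i i') (hπ : ¬ π.r i i') :
    skeinAt π i i' ρ = bp (permSP (swap i i') π) ρ := by
  have hS : ∀ C, i ∈ C ∧ i' ∈ C ∨ i ∉ C ∧ i' ∉ C →
      bp (replaceTwo π (block π i ∪ block π i') C) ρ = 0 := by
    intro C hC
    refine Finsupp.single_eq_of_ne' fun h => hρ (h ▸ Or.inr ⟨Or.inl (π.refl i),
      Or.inr (π.refl i'), by tauto⟩)
  have h2 := hS {i, i'} (Or.inl ⟨Set.mem_insert _ _, Set.mem_insert_of_mem _ rfl⟩)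
  have h3 := hS (block π i' \ {i'}) (Or.inr ⟨fun h => hπ (π.symm h.1), fun h => h.2 rfl⟩)
  have h4 := hS (block π i \ {i}) (Or.inr ⟨fun h => h.2 rfl, fun h => hπ h.1⟩)
  simp only [skeinAt, Finsupp.sub_apply, Finsupp.add_apply, h2]
  split_ifs <;> simp [h3, h4]

lemma tauFun_apply_of_not_rel_of_not_isNC (hρ : ¬ ρ.r i i')
    (hρs : ¬ IsNC (permSP (swap i i') ρ)) (hπ : IsNC π) :
    tauFun i i' π ρ = bp π ρ := by
  unfold tauFun
  split_ifs with h1 h2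
  · have : π ≠ ρ := by rintro rfl; exact hρ (block_eq_block_iff.1 h1)
    simp [bp, this]
  · have hne1 : π ≠ ρ := by rintro rfl; exact hρs h2
    have hne2 : permSP (swap i i') π ≠ ρ := by
      rintro rfl; rw [permSP_swap_permSP_swap] at hρs; exact hρs hπ
    simp [bp, hne1, hne2]
  · refine (skeinAt_apply_of_not_rel hρ fun h => h1 ?_).trans (by rw [permSP_swap_permSP_swap])
    rw [permSP_swap_rel, swap_apply_left, swap_apply_right] at h
    exact block_eq_block_iff.2 (π.symm h)

lemma tau_apply_of_not_rel_of_not_isNC {s : ℕ} (hρ : ¬ ρ.r i i')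
    (hρs : ¬ IsNC (permSP (swap i i') ρ)) {u : PMod n} (hu : u ∈ VsubKS n k s) :
    tau i i' u ρ = u ρ := by
  induction hu using Submodule.span_induction with
  | mem x hx =>
    obtain ⟨π, hπ, rfl⟩ := hx
    rw [tau_bp, tauFun_apply_of_not_rel_of_not_isNC hρ hρs hπ.1]
  | zero => simp
  | add x y _ _ hx hy => simp [hx, hy]
  | smul a x _ hx => simp [hx]

end SkeinOperator

lemma pi0_rel_iff {x y : Fin n} : (pi0 n k).r x y ↔
    (if (x : ℕ) = 0 ∨ 2 * k - 1 ≤ x then 0 else min (x : ℕ) (2 * k - 1 - x)) =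
      (if (y : ℕ) = 0 ∨ 2 * k - 1 ≤ y then 0 else min (y : ℕ) (2 * k - 1 - y)) := Iff.rfl

lemma pi1_rel_iff {x y : Fin n} : (pi1 n k).r x y ↔
    (if (x : ℕ) + 2 * k ≤ n + 1 then 0 else ((x : ℕ) - (n - 2 * k)) / 2) =
      (if (y : ℕ) + 2 * k ≤ n + 1 then 0 else ((y : ℕ) - (n - 2 * k)) / 2) := Iff.rfl

lemma val_swap_succ {i : Fin n} (hi : (i : ℕ) + 1 < n) (x : Fin n) :
    (swap i ⟨i + 1, hi⟩ x : ℕ) =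
      if (x : ℕ) = i then (i : ℕ) + 1 else if (x : ℕ) = i + 1 then (i : ℕ) else (x : ℕ) := by
  rw [swap_apply_def]
  split_ifs <;> simp_all [Fin.ext_iff]

lemma monotone_muConjLabel : Monotone (muConjLabel n k) := by
  intro x y (hxy : (x : ℕ) ≤ y)
  simp only [muConjLabel]
  split_ifs <;> omega

lemma monotone_nuLabel : Monotone (nuLabel n k) := by
  intro x y (hxy : (x : ℕ) ≤ y)
  simp only [nuLabel]
  split_ifs <;> omega

lemma pi1_rel_of_muConjLabel_eq (hn : 2 * k < n) {i : Fin n} (hi : (i : ℕ) + 1 < n)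
    (h : muConjLabel n k i = muConjLabel n k ⟨i + 1, hi⟩) : (pi1 n k).r i ⟨i + 1, hi⟩ := by
  simp only [muConjLabel] at h
  rw [pi1_rel_iff]
  dsimp only
  split_ifs at h ⊢ <;> omega

lemma not_pi0_rel_of_nuLabel_eq (hk : 2 ≤ k) {i : Fin n} (hi : (i : ℕ) + 1 < n)
    (h : nuLabel n k i = nuLabel n k ⟨i + 1, hi⟩) : ¬ (pi0 n k).r i ⟨i + 1, hi⟩ := by
  simp only [nuLabel] at h
  rw [pi0_rel_iff]
  grind

lemma not_isNC_permSP_swap_pi0_of_nuLabel_eq (hk : 2 ≤ k) (hn : 2 * k < n) {i : Fin n}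
    (hi : (i : ℕ) + 1 < n) (h : nuLabel n k i = nuLabel n k ⟨i + 1, hi⟩) :
    ¬ IsNC (permSP (swap i ⟨i + 1, hi⟩) (pi0 n k)) := by
  have hb : (i : ℕ) + 2 ≤ 2 * k ∧ (i : ℕ) + 1 ≠ k := by
    simp only [nuLabel] at h
    grind
  -- `s_i` makes `i` and `i + 1` cross the mirror pair `2k - 2 - i`, `2k - 1 - i` of `π₀`
  intro hNC
  rcases lt_or_ge (i : ℕ) k with hik | hik
  · have := hNC i ⟨i + 1, hi⟩ ⟨2 * k - 2 - i, by omega⟩ ⟨2 * k - 1 - i, by omega⟩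
      (by simp [Fin.lt_def]) (by simp [Fin.lt_def]; omega) (by simp [Fin.lt_def]; omega)
      (by simp only [permSP_swap_rel, pi0_rel_iff, val_swap_succ]; grind)
      (by simp only [permSP_swap_rel, pi0_rel_iff, val_swap_succ]; grind)
    simp only [permSP_swap_rel, pi0_rel_iff, val_swap_succ] at this
    grind
  · have := hNC ⟨2 * k - 2 - i, by omega⟩ ⟨2 * k - 1 - i, by omega⟩ i ⟨i + 1, hi⟩
      (by simp [Fin.lt_def]; omega) (by simp [Fin.lt_def]; omega) (by simp [Fin.lt_def])
      (by simp only [permSP_swap_rel, pi0_rel_iff, val_swap_succ]; grind)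
      (by simp only [permSP_swap_rel, pi0_rel_iff, val_swap_succ]; grind)
    simp only [permSP_swap_rel, pi0_rel_iff, val_swap_succ] at this
    grind

lemma card_youngFinset (c : Fin n → ℕ) :
    #(youngFinset n c) = ∏ v ∈ univ.image c, (Fintype.card {a // c a = v}).factorial := by
  rw [← DomMulAct.stabilizer_card', youngFinset, ← Fintype.card_subtype]
  exact Fintype.card_congr (Equiv.subtypeEquivRight fun w => by simp [funext_iff])

lemma card_fiber_eq_card {c : Fin n → ℕ} {v : ℕ} {S : Finset ℕ}
    (hS : ∀ m (hm : m < n), c ⟨m, hm⟩ = v ↔ m ∈ S) (hSn : ∀ m ∈ S, m < n) :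
    Fintype.card {a // c a = v} = #S := by
  rw [Fintype.card_subtype]
  refine card_bij (fun a _ => (a : ℕ)) (fun a ha => (hS a a.2).1 (mem_filter.1 ha).2)
    (fun _ _ _ _ => Fin.ext) fun m hm => ⟨⟨m, hSn m hm⟩, ?_, rfl⟩
  exact mem_filter.2 ⟨mem_univ _, (hS m _).2 hm⟩

lemma card_youngFinset_muConjLabel (hk : 2 ≤ k) (hn : 2 * k < n) :
    #(youngFinset n (muConjLabel n k)) = 2 ^ (k - 2) * (n - 2 * k + 2).factorial := by
  have himage : univ.image (muConjLabel n k) =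
      insert 0 (insert (n - 2) (insert (n - 1) ((range (k - 2)).image (1 + ·)))) := by
    ext v
    simp only [mem_image, mem_univ, true_and, mem_insert, mem_range, muConjLabel]
    constructor
    · rintro ⟨a, rfl⟩
      split_ifs
      · exact Or.inl rfl
      · omega
      · exact Or.inr (Or.inr (Or.inr ⟨_, by omega, rfl⟩))
    · rintro (rfl | rfl | rfl | ⟨j, hj, rfl⟩)
      exacts [⟨⟨0, by omega⟩, by grind⟩, ⟨⟨n - 2, by omega⟩, by grind⟩,
        ⟨⟨n - 1, by omega⟩, by grind⟩, ⟨⟨n - 2 * k + 2 + 2 * j, by omega⟩, by grind⟩]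
  have hfib0 : Fintype.card {a // muConjLabel n k a = 0} = n - 2 * k + 2 :=
    (card_fiber_eq_card (S := range _) (fun m _ => by simp [muConjLabel]; grind)
      (fun m hm => by simp at hm; omega)).trans (card_range _)
  have hfib1 (v : ℕ) (hv : v = n - 2 ∨ v = n - 1) :
      Fintype.card {a // muConjLabel n k a = v} = 1 :=
    card_fiber_eq_card (S := {v}) (fun m _ => by simp [muConjLabel]; grind)
      (fun m hm => by simp at hm; omega)
  have hfib2 (j : ℕ) (hj : j < k - 2) : Fintype.card {a // muConjLabel n k a = 1 + j} = 2 :=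
    (card_fiber_eq_card (S := {n - 2 * k + 2 + 2 * j, n - 2 * k + 3 + 2 * j})
      (fun m _ => by simp [muConjLabel]; grind) (fun m hm => by simp at hm; omega)).trans
      (card_pair (by omega))
  rw [card_youngFinset, himage, prod_insert (by simp; grind), prod_insert (by simp; grind),
    prod_insert (by simp; grind), prod_image (by simp), hfib0, hfib1 _ (Or.inl rfl),
    hfib1 _ (Or.inr rfl), prod_congr rfl fun j hj => by rw [hfib2 j (mem_range.1 hj)]]
  simp [mul_comm]

def IsSkeinAction (φ : Perm (Fin n) →* Module.End ℚ (VsubKS n k 0)) : Prop :=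
  ∀ (i : Fin n) (hi : (i : ℕ) + 1 < n) (x : VsubKS n k 0),
    ((φ (swap i ⟨i + 1, hi⟩) x : VsubKS n k 0) : PMod n) = tau i ⟨i + 1, hi⟩ (x : PMod n)

namespace IsSkeinAction

variable {φ : Perm (Fin n) →* Module.End ℚ (VsubKS n k 0)}

lemma apply_pi1 (hφ : IsSkeinAction φ) (hn : 2 * k < n) (hm1 : bp (pi1 n k) ∈ VsubKS n k 0)
    {w : Perm (Fin n)} (hw : w ∈ youngFinset n (muConjLabel n k)) :
    φ w ⟨bp (pi1 n k), hm1⟩ = ((Perm.sign w : ℤ) : ℚ) • ⟨bp (pi1 n k), hm1⟩ := by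
  refine Perm.apply_eq_sign_smul_of_mem_closure φ ?_
    (Perm.mem_closure_adjSwapsWithinFibers monotone_muConjLabel (mem_filter.1 hw).2)
  rintro _ ⟨i, hi, hc, rfl⟩
  ext1
  rw [hφ, tau_bp, tauFun_of_rel (pi1_rel_of_muConjLabel_eq hn hi hc),
    Perm.sign_swap (Fin.ne_of_val_ne (Nat.ne_add_one i))]
  simp

lemma sum_sign_smul_apply_pi1 (hφ : IsSkeinAction φ) (hk : 2 ≤ k) (hn : 2 * k < n)
    (hm1 : bp (pi1 n k) ∈ VsubKS n k 0) :
    ∑ w ∈ youngFinset n (muConjLabel n k), ((Perm.sign w : ℤ) : ℚ) • φ w ⟨bp (pi1 n k), hm1⟩ =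
      ((2 ^ (k - 2) * (n - 2 * k + 2).factorial : ℚ)) • ⟨bp (pi1 n k), hm1⟩ := by
  rw [sum_congr rfl fun w hw => by rw [hφ.apply_pi1 hn hm1 hw, smul_smul, ← Int.cast_mul,
    ← Units.val_mul, Int.units_mul_self, Units.val_one, Int.cast_one, one_smul], sum_const,
    card_youngFinset_muConjLabel hk hn, ← Nat.cast_smul_eq_nsmul ℚ]
  push_cast
  rfl

lemma apply_coeff_pi0 (hφ : IsSkeinAction φ) (hk : 2 ≤ k) (hn : 2 * k < n)
    {w : Perm (Fin n)} (hw : w ∈ youngFinset n (nuLabel n k)) (v : VsubKS n k 0) :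
    (φ w v : PMod n) (pi0 n k) = (v : PMod n) (pi0 n k) := by
  refine Module.End.apply_invariant_of_mem_closure φ
    (fun v : VsubKS n k 0 => (v : PMod n) (pi0 n k)) ?_
    (Perm.mem_closure_adjSwapsWithinFibers monotone_nuLabel (mem_filter.1 hw).2) v
  rintro _ ⟨i, hi, hc, rfl⟩ v
  rw [hφ]
  exact tau_apply_of_not_rel_of_not_isNC (not_pi0_rel_of_nuLabel_eq hk hi hc)
    (not_isNC_permSP_swap_pi0_of_nuLabel_eq hk hn hi hc) v.2

lemma sum_apply_pi0_ne_zero (hφ : IsSkeinAction φ) (hk : 2 ≤ k) (hn : 2 * k < n)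
    (hm0 : bp (pi0 n k) ∈ VsubKS n k 0) :
    ∑ w ∈ youngFinset n (nuLabel n k), φ w ⟨bp (pi0 n k), hm0⟩ ≠ 0 := by
  intro h
  have hcard : (#(youngFinset n (nuLabel n k)) : ℚ) = 0 := by
    have h0 := congrArg (fun v : VsubKS n k 0 => (v : PMod n) (pi0 n k)) h
    simp only [Submodule.coe_sum, Finsupp.finsetSum_apply,
      sum_congr rfl fun w hw => hφ.apply_coeff_pi0 hk hn hw _] at h0
    simpa [bp] using h0
  have h1 : (1 : Perm (Fin n)) ∈ youngFinset n (nuLabel n k) :=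
    mem_filter.2 ⟨mem_univ _, fun _ => rfl⟩
  exact card_ne_zero_of_mem h1 (by exact_mod_cast hcard)

end IsSkeinAction

end SkeinNC

open SkeinNC in
/-- **Lemma (nonvanishing).** Let `n > 2k`, `k ≥ 2`, `μ = (k,k-1,1^{n-2k})` and
`ν = (k,k,1^{n-2k-1})` (partitions of `n-1`, with their Young subgroups regarded inside
`S_n`).  Then in the skein module `V(n,k,0)`:
`[S_{μ'}]₋ · π₁ = 2^{k-2} (n-2k+2)! ⬝ π₁ ≠ 0`, and `[S_ν]₊ · π₀ ≠ 0`. -/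
theorem nonvanishing_lemma (n k : ℕ) (hk : 2 ≤ k) (hn : 2 * k < n)
    (φ : Equiv.Perm (Fin n) →* Module.End ℚ ↥(VsubKS n k 0))
    (hφ : ∀ (i : Fin n) (hi : (i : ℕ) + 1 < n) (x : ↥(VsubKS n k 0)),
      ((φ (Equiv.swap i ⟨(i : ℕ) + 1, hi⟩) x : ↥(VsubKS n k 0)) : PMod n)
        = tau i ⟨(i : ℕ) + 1, hi⟩ (x : PMod n))
    (hm0 : bp (pi0 n k) ∈ VsubKS n k 0) (hm1 : bp (pi1 n k) ∈ VsubKS n k 0) :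
    (∑ w ∈ youngFinset n (muConjLabel n k),
        ((Equiv.Perm.sign w : ℤ) : ℚ) • φ w ⟨bp (pi1 n k), hm1⟩)
      = ((2 ^ (k - 2) * Nat.factorial (n - 2 * k + 2) : ℚ))
          • (⟨bp (pi1 n k), hm1⟩ : ↥(VsubKS n k 0)) ∧
    (∑ w ∈ youngFinset n (muConjLabel n k),
        ((Equiv.Perm.sign w : ℤ) : ℚ) • φ w ⟨bp (pi1 n k), hm1⟩) ≠ 0 ∧
    (∑ w ∈ youngFinset n (nuLabel n k), φ w ⟨bp (pi0 n k), hm0⟩) ≠ 0 := by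
  have hsum := IsSkeinAction.sum_sign_smul_apply_pi1 hφ hk hn hm1
  have hπ₁ : (⟨bp (pi1 n k), hm1⟩ : VsubKS n k 0) ≠ 0 :=
    Subtype.coe_ne_coe.1 (Finsupp.single_ne_zero.2 one_ne_zero)
  exact ⟨hsum, hsum ▸ smul_ne_zero (by positivity) hπ₁,
    IsSkeinAction.sum_apply_pi0_ne_zero hφ hk hn hm0⟩
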